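/- arXiv:1604.05823 — 8 statements merged into one kernel-verified Lean document; each statement's English description precedes it below -/
import Mathlib

section
/- Let A be an s × m full-row-rank matrix over F_q and C_i linear codes of length n with minimum distance d_i. Then the minimum distance of the matrix product code C = [C_1, ..., C_s]A satisfies d(C) ≥ min{ d_1·d(U_A(1)), d_2·d(U_A(2)), ..., d_s·d(U_A(s)) }, where U_A(k) is the linear code of length m generated by the first k rows of A. -/
open Finset Matrix

/-- `l` is a prime power. -/
def PrimePow (l : ℕ) : Prop := ∃ p k : ℕ, p.Prime ∧ 0 < k ∧ l = p ^ k

/-- `l` is a power of an odd prime. -/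
def OddPrimePow (l : ℕ) : Prop := ∃ p k : ℕ, p.Prime ∧ Odd p ∧ 0 < k ∧ l = p ^ k

/-- Euclidean dual of a code `C ⊆ F^ι`. -/
def euclDual {F : Type*} [Field F] {ι : Type*} [Fintype ι] (C : Set (ι → F)) : Set (ι → F) :=
  {x | ∀ c ∈ C, ∑ i, x i * c i = 0}

/-- Hermitian dual (w.r.t. `⟨x,y⟩_h = ∑ x i * (y i)^l`) of a code `C ⊆ F^ι`. -/
def hermDual {F : Type*} [Field F] (l : ℕ) {ι : Type*} [Fintype ι] (C : Set (ι → F)) :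
    Set (ι → F) :=
  {x | ∀ c ∈ C, ∑ i, x i * c i ^ l = 0}

/-- Coordinatewise Frobenius image `C^l` of a code. -/
def frobImage {F : Type*} [Field F] (l : ℕ) {ι : Type*} (C : Set (ι → F)) : Set (ι → F) :=
  (fun c (i : ι) => c i ^ l) '' C

/-- The matrix product code `[C_1, …, C_s]A ⊆ F^{nm}` (an `n × m` matrix is identified with a
vector of length `nm` indexed by `Fin n × Fin m`). -/
def matProdCode {F : Type*} [Field F] {n s m : ℕ} (C : Fin s → Set (Fin n → F))
    (A : Matrix (Fin s) (Fin m) F) : Set (Fin n × Fin m → F) :=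
  {v | ∃ c : Fin s → Fin n → F, (∀ i, c i ∈ C i) ∧ ∀ p, v p = ∑ i, c i p.1 * A i p.2}

/-- Minimum (Hamming) distance of a linear code: the least Hamming weight of a
nonzero codeword. -/
noncomputable def minDist {F : Type*} [Field F] [DecidableEq F] {ι : Type*} [Fintype ι]
    (C : Set (ι → F)) : ℕ :=
  sInf {w | ∃ c ∈ C, c ≠ 0 ∧ hammingNorm c = w}

/-- An `s × m` matrix is non-singular by columns (NSC) if for every `t ≤ s` and every
strictly increasing choice of `t` columns, the `t × t` submatrix formed from the first
`t` rows and those columns is invertible. -/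
def NSC {F : Type*} [Field F] {s m : ℕ} (A : Matrix (Fin s) (Fin m) F) : Prop :=
  ∀ (t : ℕ) (ht : t ≤ s) (j : Fin t → Fin m), StrictMono j →
    IsUnit (Matrix.of fun r c : Fin t => A (Fin.castLE ht r) (j c)).det

/-- For `A` full-row-rank, every nonzero codeword of `[C_1, …, C_s]A` has Hamming weight at
least `min_i (d_i * d(U_A(i)))`, where `U_A(i)` is spanned by the first rows of `A` up to `i`. -/
theorem stmt7 {F : Type*} [Field F] [DecidableEq F] {n s m : ℕ} (hs : 0 < s)
    (A : Matrix (Fin s) (Fin m) F)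
    (hA : LinearIndependent F fun i : Fin s => (A i : Fin m → F))
    (C : Fin s → Submodule F (Fin n → F)) (d : Fin s → ℕ)
    (hC0 : ∀ i, ∃ x ∈ C i, x ≠ 0)
    (hd : ∀ i, minDist (C i : Set (Fin n → F)) = d i)
    (v : Fin n × Fin m → F)
    (hv : v ∈ matProdCode (fun i => (C i : Set (Fin n → F))) A) (hv0 : v ≠ 0) :
    Finset.univ.inf' (Finset.univ_nonempty_iff.mpr ⟨⟨0, hs⟩⟩)
      (fun i : Fin s => d i *
        minDist ((Submodule.span F {x : Fin m → F | ∃ i' : Fin s, i' ≤ i ∧ x = A i'} :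
          Submodule F (Fin m → F)) : Set (Fin m → F))) ≤ hammingNorm v := by

  classical
  obtain ⟨c, hc, hvdef⟩ := hv
  have hex : ∃ i, c i ≠ 0 := by
    by_contra h
    push_neg at h
    apply hv0
    funext p
    simp [hvdef, h]
  set T : Finset (Fin s) := Finset.univ.filter (fun i => c i ≠ 0) with hT
  have hTne : T.Nonempty := by
    obtain ⟨i, hi⟩ := hex
    exact ⟨i, by simp [hT, hi]⟩
  set k := T.max' hTne with hk
  have hkmem : c k ≠ 0 := by
    have := T.max'_mem hTne
    simpa [hT] using this
  have hgt : ∀ i, k < i → c i = 0 := by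
    intro i hi
    by_contra h
    exact absurd (T.le_max' i (by simp [hT, h])) (not_le.mpr hi)
  set U : Submodule F (Fin m → F) :=
    Submodule.span F {x : Fin m → F | ∃ i' : Fin s, i' ≤ k ∧ x = A i'} with hU
  have hrow : ∀ r : Fin n, (fun j => v (r, j)) = ∑ i, c i r • (A i : Fin m → F) := by
    intro r; funext j
    simp [hvdef (r, j), Finset.sum_apply, smul_eq_mul]
  have hrowmem : ∀ r : Fin n, (fun j => v (r, j)) ∈ U := by
    intro r
    rw [hrow r]
    apply Submodule.sum_mem
    intro i _
    rcases le_or_gt i k with h | h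
    · exact Submodule.smul_mem _ _ (Submodule.subset_span ⟨i, h, rfl⟩)
    · simp [hgt i h]
  have hrowne : ∀ r : Fin n, c k r ≠ 0 → (fun j => v (r, j)) ≠ 0 := by
    intro r hckr h0
    have hsum : ∑ i, c i r • (A i : Fin m → F) = 0 := by rw [← hrow r, h0]
    exact hckr (Fintype.linearIndependent_iff.mp hA (fun i => c i r) hsum k)
  -- abbreviations
  set dU := minDist (U : Set (Fin m → F)) with hdU
  have hrowge : ∀ r : Fin n, c k r ≠ 0 → dU ≤ hammingNorm (fun j => v (r, j)) := by
    intro r hckr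
    exact Nat.sInf_le ⟨fun j => v (r, j), hrowmem r, hrowne r hckr, rfl⟩
  have hck : d k ≤ hammingNorm (c k) := by
    rw [← hd k]
    exact Nat.sInf_le ⟨c k, hc k, hkmem, rfl⟩
  -- decompose hammingNorm v by rows
  have hdecomp : hammingNorm v = ∑ r : Fin n, hammingNorm (fun j => v (r, j)) := by
    unfold hammingNorm
    rw [Finset.card_eq_sum_card_fiberwise
      (f := fun p : Fin n × Fin m => p.1) (t := Finset.univ) (fun x _ => Finset.mem_univ _)]
    refine Finset.sum_congr rfl fun r _ => ?_
    refine Finset.card_bij' (fun p _ => p.2) (fun j _ => (r, j)) ?_ ?_ ?_ ?_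
    · intro p hp
      simp only [Finset.mem_filter, Finset.mem_univ, true_and] at hp ⊢
      rw [← hp.2]; exact hp.1
    · intro j hj
      simp only [Finset.mem_filter, Finset.mem_univ, true_and] at hj ⊢
      exact ⟨hj, trivial⟩
    · intro p hp
      simp only [Finset.mem_filter] at hp
      exact Prod.ext_iff.mpr ⟨hp.2.symm, rfl⟩
    · intro j _; rfl
  have hbound : d k * dU ≤ hammingNorm v := by
    rw [hdecomp]
    calc d k * dU ≤ hammingNorm (c k) * dU := Nat.mul_le_mul_right _ hck
      _ = ∑ r ∈ Finset.univ.filter (fun r => c k r ≠ 0), dU := by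
          rw [Finset.sum_const, smul_eq_mul]; rfl
      _ ≤ ∑ r ∈ Finset.univ.filter (fun r => c k r ≠ 0),
            hammingNorm (fun j => v (r, j)) := by
          refine Finset.sum_le_sum fun r hr => ?_
          exact hrowge r (by simpa using hr)
      _ ≤ ∑ r : Fin n, hammingNorm (fun j => v (r, j)) :=
          Finset.sum_le_sum_of_subset (Finset.filter_subset _ _)
  exact le_trans (Finset.inf'_le _ (Finset.mem_univ k)) hbound
end

section
/- Let A be an s × m non-singular-by-columns (NSC) matrix over F_q and C_i be [n, k_i, d_i] linear codes. Then the minimum distance of C = [C_1, ..., C_s]A satisfies d(C) ≥ min{ m·d_1, (m−1)·d_2, ..., (m−s+1)·d_s }. -/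
open Finset Matrix

private lemma key {F : Type*} [Field F] [DecidableEq F] {s m : ℕ}
    (A : Matrix (Fin s) (Fin m) F) (hA : NSC A) (x : Fin s → F) (t : Fin s)
    (hxt : x t ≠ 0) (hgt : ∀ i, t < i → x i = 0) :
    m - (t : ℕ) ≤ hammingNorm (fun j => ∑ i, x i * A i j) := by
  by_contra hcon
  push_neg at hcon
  set f : Fin m → F := fun j => ∑ i, x i * A i j with hf
  have hsplit := Finset.card_filter_add_card_filter_not
    (s := (univ : Finset (Fin m))) (p := fun j => f j ≠ 0)
  have hnorm : hammingNorm f = #{j | f j ≠ 0} := rfl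
  simp only [Finset.card_univ, Fintype.card_fin] at hsplit
  have hZ : (t : ℕ) + 1 ≤ #(univ.filter (fun j => ¬ f j ≠ 0)) := by omega
  obtain ⟨S, hS, hScard⟩ := Finset.exists_subset_card_eq hZ
  have ht1 : (t : ℕ) + 1 ≤ s := t.2
  set j : Fin ((t:ℕ)+1) → Fin m := ⇑(S.orderEmbOfFin hScard) with hjdef
  have hj : StrictMono j := (S.orderEmbOfFin hScard).strictMono
  have hdet := hA ((t:ℕ)+1) ht1 j hj
  set M := Matrix.of fun r c : Fin ((t:ℕ)+1) => A (Fin.castLE ht1 r) (j c) with hM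
  set y : Fin ((t:ℕ)+1) → F := fun r => x (Fin.castLE ht1 r) with hy
  have hzero : ∀ c, f (j c) = 0 := by
    intro c
    have hjc : j c ∈ S := S.orderEmbOfFin_mem hScard c
    have := hS hjc
    simpa using (Finset.mem_filter.mp this).2
  have hvm : y ᵥ* M = 0 := by
    funext c
    have hsum : ∑ r : Fin ((t:ℕ)+1), x (Fin.castLE ht1 r) * A (Fin.castLE ht1 r) (j c)
        = ∑ i : Fin s, x i * A i (j c) := by
      have himg : ∑ i ∈ (univ.image (Fin.castLE ht1)), x i * A i (j c)
          = ∑ r : Fin ((t:ℕ)+1), x (Fin.castLE ht1 r) * A (Fin.castLE ht1 r) (j c) :=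
        Finset.sum_image (fun a _ b _ h => Fin.castLE_injective ht1 h)
      rw [← himg]
      apply Finset.sum_subset (Finset.subset_univ _)
      intro i _ hi
      have : (t : ℕ) < (i : ℕ) := by
        by_contra hle
        push_neg at hle
        exact hi (Finset.mem_image.mpr ⟨⟨i, by omega⟩, Finset.mem_univ _, Fin.ext rfl⟩)
      rw [hgt i this, zero_mul]
    simp only [Matrix.vecMul, dotProduct, Pi.zero_apply]
    rw [hy, hM]
    simpa [hsum] using hzero c
  have hy0 : y = 0 := by
    have h2 := congrArg (fun z => z ᵥ* M⁻¹) hvm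
    simpa [Matrix.vecMul_vecMul, Matrix.mul_nonsing_inv M hdet] using h2
  have hlast : y (Fin.last (t : ℕ)) = x t := by
    show x (Fin.castLE ht1 (Fin.last (t:ℕ))) = x t
    congr 1
  rw [hy0] at hlast
  exact hxt hlast.symm

private lemma hammingNorm_prod {F : Type*} [DecidableEq F] [Zero F] {n m : ℕ}
    (v : Fin n × Fin m → F) :
    hammingNorm v = ∑ r : Fin n, hammingNorm (fun j => v (r, j)) := by
  simp only [hammingNorm, Finset.card_filter]
  rw [Fintype.sum_prod_type]

/-- For `A` an `s × m` NSC matrix, every nonzero codeword of `[C_1, …, C_s]A` has Hamming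
weight at least `min {m d_1, (m-1) d_2, …, (m-s+1) d_s}`. -/
theorem stmt8 {F : Type*} [Field F] [DecidableEq F] {n s m : ℕ} (hs : 0 < s)
    (A : Matrix (Fin s) (Fin m) F) (hA : NSC A)
    (C : Fin s → Submodule F (Fin n → F)) (k d : Fin s → ℕ)
    (hk : ∀ i, Module.finrank F (C i) = k i)
    (hC0 : ∀ i, ∃ x ∈ C i, x ≠ 0)
    (hd : ∀ i, minDist (C i : Set (Fin n → F)) = d i)
    (v : Fin n × Fin m → F)
    (hv : v ∈ matProdCode (fun i => (C i : Set (Fin n → F))) A) (hv0 : v ≠ 0) :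
    Finset.univ.inf' (Finset.univ_nonempty_iff.mpr ⟨⟨0, hs⟩⟩)
      (fun i : Fin s => (m - (i : ℕ)) * d i) ≤ hammingNorm v := by
  obtain ⟨c, hc, hvp⟩ := hv
  have hcne : ∃ i, c i ≠ 0 := by
    by_contra h
    push_neg at h
    exact hv0 (funext fun p => by simp [hvp p, h])
  set T : Finset (Fin s) := univ.filter (fun i => c i ≠ 0) with hT
  have hTne : T.Nonempty := ⟨hcne.choose, by simp [hT, hcne.choose_spec]⟩
  set t : Fin s := T.max' hTne with htdef
  have htmem : c t ≠ 0 := by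
    have h := T.max'_mem hTne
    simp only [hT, Finset.mem_filter] at h
    exact h.2
  have hgt : ∀ i, t < i → c i = 0 := by
    intro i hi
    by_contra h
    exact absurd (Finset.le_max' T i (by simp [hT, h])) (not_le.mpr hi)
  have hdt : d t ≤ hammingNorm (c t) :=
    (hd t) ▸ Nat.sInf_le ⟨c t, hc t, htmem, rfl⟩
  have hrow : ∀ r : Fin n, c t r ≠ 0 → m - (t : ℕ) ≤ hammingNorm (fun j => v (r, j)) := by
    intro r hr
    have hk := key A hA (fun i => c i r) t hr (fun i hi => by simp [hgt i hi])
    have : (fun j => v (r, j)) = fun j => ∑ i, c i r * A i j :=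
      funext fun j => hvp (r, j)
    rw [this]
    exact hk
  have step1 : Finset.univ.inf' (Finset.univ_nonempty_iff.mpr ⟨⟨0, hs⟩⟩)
      (fun i : Fin s => (m - (i : ℕ)) * d i) ≤ (m - (t : ℕ)) * d t :=
    Finset.inf'_le _ (Finset.mem_univ t)
  refine step1.trans ?_
  have step2 : (m - (t : ℕ)) * d t ≤ ∑ r ∈ univ.filter (fun r => c t r ≠ 0), (m - (t : ℕ)) := by
    rw [Finset.sum_const, smul_eq_mul]
    have : #(univ.filter (fun r => c t r ≠ 0)) = hammingNorm (c t) := rfl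
    rw [this, mul_comm]
    exact Nat.mul_le_mul_right _ hdt
  refine step2.trans ?_
  rw [hammingNorm_prod v]
  calc ∑ r ∈ univ.filter (fun r => c t r ≠ 0), (m - (t : ℕ))
      ≤ ∑ r ∈ univ.filter (fun r => c t r ≠ 0), hammingNorm (fun j => v (r, j)) :=
        Finset.sum_le_sum fun r hr => hrow r (Finset.mem_filter.mp hr).2
    _ ≤ ∑ r : Fin n, hammingNorm (fun j => v (r, j)) :=
        Finset.sum_le_sum_of_subset (Finset.filter_subset _ _)
end

section
/- Let A be an s × s invertible matrix over F_q and C_1, ..., C_s linear codes of length n over F_q. Then the Euclidean dual of the matrix product code satisfies ([C_1, ..., C_s]A)^⊥ = [C_1^⊥, ..., C_s^⊥] (A^{-1})^T. -/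
open Finset Matrix

/-- For `A` an invertible `s × s` matrix, `([C_1, …, C_s]A)^⊥ = [C_1^⊥, …, C_s^⊥](A⁻¹)ᵀ`. -/
theorem stmt9 {F : Type*} [Field F] {n s : ℕ} (A : Matrix (Fin s) (Fin s) F)
    (hA : IsUnit A.det) (C : Fin s → Submodule F (Fin n → F)) :
    euclDual (matProdCode (fun i => (C i : Set (Fin n → F))) A) =
      matProdCode (fun i => euclDual (C i : Set (Fin n → F))) (A⁻¹)ᵀ := by
  have hAinv : A⁻¹ * A = 1 := Matrix.nonsing_inv_mul A hA
  have hinvA : A * A⁻¹ = 1 := Matrix.mul_nonsing_inv A hA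
  ext x
  simp only [euclDual, matProdCode, Set.mem_setOf_eq]
  constructor
  · intro hx
    refine ⟨fun i j => ∑ k, x (j, k) * A i k, ?_, ?_⟩
    · intro i c hc
      have hmem : (fun p : Fin n × Fin s => c p.1 * A i p.2) ∈
          matProdCode (fun i => (C i : Set (Fin n → F))) A := by
        refine ⟨fun i' => if i' = i then c else 0, ?_, ?_⟩
        · intro i'
          by_cases h : i' = i <;> simp [h, hc, Submodule.zero_mem]
        · intro p
          have he : ∀ i', (if i' = i then c else 0) p.1 * A i' p.2
              = if i' = i then c p.1 * A i' p.2 else 0 := by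
            intro i'; split <;> simp
          simp only [he, Finset.sum_ite_eq', Finset.mem_univ, if_true]
      have h0 := hx _ hmem
      rw [← h0, Fintype.sum_prod_type]
      refine Finset.sum_congr rfl fun j _ => ?_
      rw [Finset.sum_mul]
      refine Finset.sum_congr rfl fun k _ => ?_
      show x (j, k) * A i k * c j = x (j, k) * (c j * A i k)
      ring
    · intro p
      have h1 : ∀ k, ∑ i, x (p.1, k) * A i k * (A⁻¹)ᵀ i p.2
          = x (p.1, k) * (A⁻¹ * A) p.2 k := by
        intro k
        rw [Matrix.mul_apply, Finset.mul_sum]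
        exact Finset.sum_congr rfl fun i _ => by
          rw [Matrix.transpose_apply]; ring
      calc x p = ∑ k, x (p.1, k) * (A⁻¹ * A) p.2 k := by
            simp [hAinv, Matrix.one_apply, mul_ite, Finset.sum_ite_eq]
        _ = ∑ k, ∑ i, x (p.1, k) * A i k * (A⁻¹)ᵀ i p.2 := by
            exact Finset.sum_congr rfl fun k _ => (h1 k).symm
        _ = ∑ i, ∑ k, x (p.1, k) * A i k * (A⁻¹)ᵀ i p.2 := Finset.sum_comm
        _ = ∑ i, (∑ k, x (p.1, k) * A i k) * (A⁻¹)ᵀ i p.2 := by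
            exact Finset.sum_congr rfl fun i _ => (Finset.sum_mul _ _ _).symm
  · rintro ⟨d, hd, hx⟩ v ⟨c, hc, hv⟩
    have key : ∀ (j : Fin n) (i : Fin s), ∑ k, A⁻¹ k i * v (j, k) = c i j := by
      intro j i
      have h1 : ∀ k, A⁻¹ k i * v (j, k) = ∑ i', c i' j * (A i' k * A⁻¹ k i) := by
        intro k
        rw [hv (j, k), Finset.mul_sum]
        exact Finset.sum_congr rfl fun i' _ => by ring
      calc ∑ k, A⁻¹ k i * v (j, k)
          = ∑ k, ∑ i', c i' j * (A i' k * A⁻¹ k i) := Finset.sum_congr rfl fun k _ => h1 k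
        _ = ∑ i', ∑ k, c i' j * (A i' k * A⁻¹ k i) := Finset.sum_comm
        _ = ∑ i', c i' j * (A * A⁻¹) i' i := by
            refine Finset.sum_congr rfl fun i' _ => ?_
            rw [Matrix.mul_apply, Finset.mul_sum]
        _ = c i j := by simp [hinvA, Matrix.one_apply, mul_ite, Finset.sum_ite_eq]
    rw [Fintype.sum_prod_type]
    calc ∑ j, ∑ k, x (j, k) * v (j, k)
        = ∑ j, ∑ k, ∑ i, d i j * (A⁻¹ k i * v (j, k)) := by
          refine Finset.sum_congr rfl fun j _ => Finset.sum_congr rfl fun k _ => ?_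
          rw [hx (j, k), Finset.sum_mul]
          exact Finset.sum_congr rfl fun i _ => by rw [Matrix.transpose_apply]; ring
      _ = ∑ j, ∑ i, ∑ k, d i j * (A⁻¹ k i * v (j, k)) :=
          Finset.sum_congr rfl fun j _ => Finset.sum_comm
      _ = ∑ j, ∑ i, d i j * c i j := by
          refine Finset.sum_congr rfl fun j _ => Finset.sum_congr rfl fun i _ => ?_
          rw [← Finset.mul_sum, key j i]
      _ = ∑ i, ∑ j, d i j * c i j := Finset.sum_comm
      _ = 0 := by
          refine Finset.sum_eq_zero fun i _ => hd i (c i) (hc i)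
end

section
/- Let l be a power of an odd prime, F = GF(l^2), A an s × s matrix over F, and C_1, ..., C_s linear codes of length n over F each satisfying C_i^⊥h ⊆ C_i. If A^{(l)} A^T is an invertible diagonal matrix, where A^{(l)} = (a_{ij}^l), then the matrix product code C = [C_1, ..., C_s]A satisfies C^⊥h ⊆ C. -/
open Finset Matrix

/-- If each `C_i` is Hermitian dual-containing and `A^{(l)} Aᵀ` is an invertible diagonal
matrix, then the matrix product code `[C_1, …, C_s]A` is Hermitian dual-containing. -/
theorem stmt10 {l : ℕ} (hl : OddPrimePow l) {F : Type*} [Field F] [Fintype F]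
    (hF : Fintype.card F = l ^ 2) {n s : ℕ} (A : Matrix (Fin s) (Fin s) F)
    (u : Fin s → F) (hu : ∀ i, u i ≠ 0)
    (hA : A.map (· ^ l) * Aᵀ = Matrix.diagonal u)
    (C : Fin s → Submodule F (Fin n → F))
    (hC : ∀ i, hermDual l (C i : Set (Fin n → F)) ⊆ (C i : Set (Fin n → F))) :
    hermDual l (matProdCode (fun i => (C i : Set (Fin n → F))) A) ⊆
      matProdCode (fun i => (C i : Set (Fin n → F))) A := by

  classical
  intro x hx
  -- the "syndrome" vectors
  set y : Fin s → Fin n → F := fun i a => ∑ j, x (a, j) * (A i j) ^ l with hy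
  have hyC : ∀ i, y i ∈ C i := by
    intro i
    apply hC i
    intro c hc
    have hv : (fun p : Fin n × Fin s => c p.1 * A i p.2) ∈
        matProdCode (fun i => (C i : Set (Fin n → F))) A := by
      refine ⟨fun k => if k = i then c else 0, ?_, ?_⟩
      · intro k; by_cases h : k = i <;> simp [h, hc]
      · intro p
        rw [Finset.sum_eq_single i]
        · simp
        · intro b _ hb; simp [hb]
        · simp
    have h0 := hx _ hv
    rw [Fintype.sum_prod_type] at h0
    calc ∑ a, y i a * c a ^ l
        = ∑ a, ∑ j, x (a, j) * (c a * A i j) ^ l := by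
          simp only [hy, Finset.sum_mul]
          refine Finset.sum_congr rfl fun a _ => Finset.sum_congr rfl fun j _ => ?_
          rw [mul_pow]; ring
      _ = 0 := h0
  -- the key matrix identity
  have h1 : (Matrix.diagonal fun i => (u i)⁻¹) * A.map (· ^ l) * Aᵀ = 1 := by
    rw [Matrix.mul_assoc, hA, Matrix.diagonal_mul_diagonal]
    have : (fun i => (u i)⁻¹ * u i) = fun _ => (1 : F) := by
      funext i; exact inv_mul_cancel₀ (hu i)
    rw [this, Matrix.diagonal_one]
  have h2 : Aᵀ * ((Matrix.diagonal fun i => (u i)⁻¹) * A.map (· ^ l)) = 1 := by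
    rw [← mul_eq_one_comm]; exact h1
  have hkey : ∀ j j' : Fin s, ∑ i, A i j * ((u i)⁻¹ * (A i j') ^ l)
      = if j = j' then 1 else 0 := by
    intro j j'
    have := congrFun (congrFun h2 j) j'
    simpa [Matrix.mul_apply, Matrix.one_apply, Matrix.transpose_apply,
      Matrix.diagonal_apply, Matrix.map_apply, ite_mul, zero_mul,
      Finset.sum_ite_eq] using this
  refine ⟨fun i => (u i)⁻¹ • y i, fun i => Submodule.smul_mem _ _ (hyC i), ?_⟩
  rintro ⟨a, j⟩
  simp only [Pi.smul_apply, smul_eq_mul]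
  have : ∑ i, (u i)⁻¹ * y i a * A i j
      = ∑ j', x (a, j') * ∑ i, A i j * ((u i)⁻¹ * (A i j') ^ l) := by
    simp only [hy, Finset.sum_mul, Finset.mul_sum]
    rw [Finset.sum_comm]
    refine Finset.sum_congr rfl fun j' _ => Finset.sum_congr rfl fun i _ => ?_
    ring
  rw [this]
  simp only [hkey, mul_ite, mul_one, mul_zero, Finset.sum_ite_eq, Finset.mem_univ, if_true]
end

section
/- Let l be a power of an odd prime, F = GF(l^2), and A an s × s invertible matrix over F such that ((A^{(l)})^{-1})^T = aA for some nonzero a ∈ F. If C_1, ..., C_s are linear codes of length n over F with C_i^⊥h ⊆ C_i for all i, then the matrix product code C = [C_1, ..., C_s]A satisfies C^⊥h ⊆ C. -/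
open Finset Matrix

/-- If each `C_i` is Hermitian dual-containing, `A` is invertible and
`((A^{(l)})⁻¹)ᵀ = a • A` for some nonzero `a`, then `[C_1, …, C_s]A` is Hermitian
dual-containing. -/
theorem stmt11 {l : ℕ} (hl : OddPrimePow l) {F : Type*} [Field F] [Fintype F]
    (hF : Fintype.card F = l ^ 2) {n s : ℕ} (A : Matrix (Fin s) (Fin s) F)
    (hdet : IsUnit A.det) (a : F) (ha : a ≠ 0)
    (hA : ((A.map (· ^ l))⁻¹)ᵀ = a • A)
    (C : Fin s → Submodule F (Fin n → F))
    (hC : ∀ i, hermDual l (C i : Set (Fin n → F)) ⊆ (C i : Set (Fin n → F))) :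
    hermDual l (matProdCode (fun i => (C i : Set (Fin n → F))) A) ⊆
      matProdCode (fun i => (C i : Set (Fin n → F))) A := by
  classical
  obtain ⟨p, k, hp, -, hk, rfl⟩ := hl
  haveI : Fact p.Prime := ⟨hp⟩
  obtain ⟨m, hrp, hcard⟩ := FiniteField.card F (ringChar F)
  have hchar : CharP F p := by
    have h1 : ringChar F ∣ Fintype.card F := hcard ▸ dvd_pow_self _ m.pos.ne'
    rw [hF, ← pow_mul] at h1
    have : ringChar F = p :=
      (Nat.prime_dvd_prime_iff_eq hrp hp).mp (hrp.dvd_of_dvd_pow h1)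
    rw [← this]; exact ringChar.charP F
  haveI : ExpChar F p := ExpChar.prime hp
  set B : Matrix (Fin s) (Fin s) F := A.map (· ^ p ^ k) with hB
  have hBdet : IsUnit B.det := by
    have hmap : B = A.map (iterateFrobenius F p k) := by
      ext i j; simp [hB, iterateFrobenius_def]
    rw [hmap]
    have h3 := RingHom.map_det (iterateFrobenius F p k) A
    rw [RingHom.mapMatrix_apply] at h3
    rw [← h3]
    exact hdet.map (iterateFrobenius F p k)
  have hBinv : B⁻¹ * B = 1 := Matrix.nonsing_inv_mul B hBdet
  have hBt : a • Aᵀ * B = 1 := by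
    have : B⁻¹ = a • Aᵀ := by
      rw [← Matrix.transpose_transpose B⁻¹, hA, Matrix.transpose_smul]
    rw [← this, hBinv]
  have hid : ∀ j j' : Fin s, (∑ i, a * A i j * A i j' ^ p ^ k) = if j = j' then 1 else 0 := by
    intro j j'
    have h2 := congrFun (congrFun hBt j) j'
    simpa [Matrix.mul_apply, Matrix.one_apply, hB, Matrix.smul_apply,
      Matrix.transpose_apply, Matrix.map_apply, mul_assoc] using h2
  intro x hx
  set y : Fin s → Fin n → F := fun i q => ∑ j, x (q, j) * A i j ^ p ^ k with hy
  have hyC : ∀ i, y i ∈ (C i : Set (Fin n → F)) := by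
    intro i
    apply hC i
    intro c hc
    have hv : (fun pp : Fin n × Fin s => c pp.1 * A i pp.2) ∈
        matProdCode (fun i => ((C i : Set (Fin n → F)))) A := by
      refine ⟨Pi.single i c, fun i' => ?_, fun pp => ?_⟩
      · rcases eq_or_ne i' i with rfl | hne
        · simpa using hc
        · simp [Pi.single_eq_of_ne hne]
      · rw [Finset.sum_eq_single i]
        · simp
        · intro i' _ hne; simp [Pi.single_eq_of_ne hne]
        · simp
    have h0 := hx _ hv
    calc ∑ q, y i q * c q ^ p ^ k
        = ∑ pp : Fin n × Fin s, x pp * (c pp.1 * A i pp.2) ^ p ^ k := by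
          rw [Fintype.sum_prod_type]
          refine Finset.sum_congr rfl fun q _ => ?_
          rw [hy]
          rw [Finset.sum_mul]
          refine Finset.sum_congr rfl fun j _ => ?_
          rw [mul_pow]; ring
      _ = 0 := h0
  refine ⟨fun i => a • y i, fun i => (C i).smul_mem a (hyC i), fun pp => ?_⟩
  simp only [Pi.smul_apply, smul_eq_mul]
  have step : ∑ i, a * y i pp.1 * A i pp.2 = x pp := by
    calc ∑ i, a * y i pp.1 * A i pp.2
        = ∑ i, ∑ j', x (pp.1, j') * (a * A i pp.2 * A i j' ^ p ^ k) := by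
          refine Finset.sum_congr rfl fun i _ => ?_
          rw [hy, Finset.mul_sum, Finset.sum_mul]
          exact Finset.sum_congr rfl fun j' _ => by ring
      _ = ∑ j', ∑ i, x (pp.1, j') * (a * A i pp.2 * A i j' ^ p ^ k) := Finset.sum_comm
      _ = ∑ j', x (pp.1, j') * ∑ i, a * A i pp.2 * A i j' ^ p ^ k := by
          simp_rw [← Finset.mul_sum]
      _ = x pp := by
          simp_rw [hid]
          simp [mul_ite, Finset.sum_ite_eq]
  exact step.symm
end

section
/- Let l be an odd prime power, F = GF(l^2), with l^2 ≡ 1 (mod 4). Let C_1, C_2, C_3, C_4 be linear codes over F of length n with parameters [n, k_j, d_j] each satisfying C_j^⊥h ⊆ C_j. Let A be the 4 × 4 matrix with rows (1,1,1,1), (1,1,−1,−1), (1,−1,1,−1), (1,−1,−1,1). Then C = [C_1, C_2, C_3, C_4]A is a Hermitian dual-containing linear code of length 4n, dimension k_1 + k_2 + k_3 + k_4, and minimum distance at least min{4d_1, 2d_2, 2d_3, d_4}. -/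
open Finset Matrix

/-- The `4 × 4` matrix with rows `(1,1,1,1), (1,1,-1,-1), (1,-1,1,-1), (1,-1,-1,1)`. -/
def hadA (F : Type*) [Field F] : Matrix (Fin 4) (Fin 4) F :=
  !![1, 1, 1, 1; 1, 1, -1, -1; 1, -1, 1, -1; 1, -1, -1, 1]

lemma hadA_symm {F : Type*} [Field F] (i j : Fin 4) : hadA F i j = hadA F j i := by
  fin_cases i <;> fin_cases j <;> simp [hadA, Matrix.vecHead, Matrix.vecTail]

lemma hadA_pm {F : Type*} [Field F] (i j : Fin 4) : hadA F i j = 1 ∨ hadA F i j = -1 := by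
  fin_cases i <;> fin_cases j <;> simp [hadA, Matrix.vecHead, Matrix.vecTail]

lemma hadA_pow {F : Type*} [Field F] {l : ℕ} (hl : Odd l) (i j : Fin 4) :
    hadA F i j ^ l = hadA F i j := by
  rcases hadA_pm (F := F) i j with h | h <;> rw [h] <;> simp [hl.neg_one_pow]

lemma recover {F : Type*} [Field F] (b : Fin 4 → F) (i : Fin 4) :
    ∑ j, (∑ kk, b kk * hadA F kk j) * hadA F i j = 4 * b i := by
  fin_cases i <;> simp [hadA, Fin.sum_univ_four, Matrix.vecHead, Matrix.vecTail] <;> ring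

lemma two_ne_zero_of_card {l : ℕ} (hl : OddPrimePow l) {F : Type*} [Field F] [Fintype F]
    (hF : Fintype.card F = l ^ 2) : (2 : F) ≠ 0 := by
  obtain ⟨q, kk, hq, hqodd, hkk, rfl⟩ := hl
  set p := ringChar F with hp
  haveI : CharP F p := ringChar.charP F
  obtain ⟨m, hpprime, hcard⟩ := FiniteField.card F p
  have hpq : p = q := by
    have hdvd : p ∣ q ^ (kk * 2) := by
      have : p ∣ Fintype.card F := by
        rw [hcard]; exact dvd_pow_self p m.pos.ne'
      rwa [hF, ← pow_mul] at this
    exact (Nat.prime_dvd_prime_iff_eq hpprime hq).mp (hpprime.dvd_of_dvd_pow hdvd)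
  intro h2
  have : p ∣ 2 := (CharP.cast_eq_zero_iff F p 2).mp h2
  have : p = 2 := (Nat.prime_dvd_prime_iff_eq hpprime Nat.prime_two).mp this
  rw [hpq] at this
  rw [this] at hqodd
  exact (by decide : ¬ Odd 2) hqodd

lemma norm_split {F : Type*} [DecidableEq F] [Zero F] {n : ℕ} (v : Fin n × Fin 4 → F) :
    hammingNorm v = ∑ x : Fin n, hammingNorm (fun j => v (x, j)) := by
  simp only [hammingNorm, Finset.card_filter]
  rw [Fintype.sum_prod_type]

section rows
variable {F : Type*} [Field F] [DecidableEq F]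

-- row weight lemmas
lemma row1 (a : Fin 4 → F) (h0 : a 0 ≠ 0) (h1 : a 1 = 0) (h2 : a 2 = 0) (h3 : a 3 = 0) :
    4 ≤ hammingNorm (fun j => ∑ i, a i * hadA F i j) := by
  have hall : ∀ j, (∑ i, a i * hadA F i j) ≠ 0 := by
    intro j
    fin_cases j <;>
      simpa [Fin.sum_univ_four, hadA, h1, h2, h3, Matrix.vecHead, Matrix.vecTail] using h0
  have : ({j | (fun j => ∑ i, a i * hadA F i j) j ≠ 0} : Finset (Fin 4)) = univ := by
    ext j; simp [hall j]
  rw [hammingNorm, this]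
  simp

lemma two_le_hnorm {w : Fin 4 → F} {i j : Fin 4} (hij : i ≠ j) (hi : w i ≠ 0)
    (hj : w j ≠ 0) : 2 ≤ hammingNorm w := by
  unfold hammingNorm
  exact Finset.one_lt_card_iff.mpr ⟨i, j, by simpa using hi, by simpa using hj, hij⟩

lemma row2 (h2F : (2 : F) ≠ 0) (a : Fin 4 → F) (h1 : a 1 ≠ 0) (h2 : a 2 = 0) (h3 : a 3 = 0) :
    2 ≤ hammingNorm (fun j => ∑ i, a i * hadA F i j) := by
  have hw0 : (∑ i, a i * hadA F i (0 : Fin 4)) = a 0 + a 1 := by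
    simp [Fin.sum_univ_four, hadA, h2, h3, Matrix.vecHead, Matrix.vecTail]
  have hw1 : (∑ i, a i * hadA F i (1 : Fin 4)) = a 0 + a 1 := by
    simp [Fin.sum_univ_four, hadA, h2, h3, Matrix.vecHead, Matrix.vecTail]
  have hw2 : (∑ i, a i * hadA F i (2 : Fin 4)) = a 0 - a 1 := by
    simp [Fin.sum_univ_four, hadA, h2, h3, Matrix.vecHead, Matrix.vecTail, sub_eq_add_neg]
  have hw3 : (∑ i, a i * hadA F i (3 : Fin 4)) = a 0 - a 1 := by
    simp [Fin.sum_univ_four, hadA, h2, h3, Matrix.vecHead, Matrix.vecTail, sub_eq_add_neg]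
  have hcase : a 0 + a 1 ≠ 0 ∨ a 0 - a 1 ≠ 0 := by
    by_contra hcon
    push_neg at hcon
    apply h1
    have h2a : 2 * a 1 = 0 := by
      have : (a 0 + a 1) - (a 0 - a 1) = 2 * a 1 := by ring
      rw [hcon.1, hcon.2] at this; simpa using this.symm
    rcases mul_eq_zero.mp h2a with h | h
    · exact absurd h h2F
    · exact h
  rcases hcase with h | h
  · exact two_le_hnorm (by decide) (hw0 ▸ h) (hw1 ▸ h)
  · exact two_le_hnorm (i := 2) (j := 3) (by decide) (hw2 ▸ h) (hw3 ▸ h)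

lemma row3 (h2F : (2 : F) ≠ 0) (a : Fin 4 → F) (ha2 : a 2 ≠ 0) (h3 : a 3 = 0) :
    2 ≤ hammingNorm (fun j => ∑ i, a i * hadA F i j) := by
  have hw0 : (∑ i, a i * hadA F i (0 : Fin 4)) = a 0 + a 1 + a 2 := by
    simp [Fin.sum_univ_four, hadA, h3, Matrix.vecHead, Matrix.vecTail] <;> ring
  have hw1 : (∑ i, a i * hadA F i (1 : Fin 4)) = a 0 + a 1 - a 2 := by
    simp [Fin.sum_univ_four, hadA, h3, Matrix.vecHead, Matrix.vecTail] <;> ring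
  have hw2 : (∑ i, a i * hadA F i (2 : Fin 4)) = a 0 - a 1 + a 2 := by
    simp [Fin.sum_univ_four, hadA, h3, Matrix.vecHead, Matrix.vecTail] <;> ring
  have hw3 : (∑ i, a i * hadA F i (3 : Fin 4)) = a 0 - a 1 - a 2 := by
    simp [Fin.sum_univ_four, hadA, h3, Matrix.vecHead, Matrix.vecTail] <;> ring
  have key : ∀ u v : F, u - v = 2 * a 2 → u ≠ 0 ∨ v ≠ 0 := by
    intro u v huv
    by_contra hcon
    push_neg at hcon
    apply ha2
    rw [hcon.1, hcon.2] at huv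
    have huv' : 2 * a 2 = 0 := by rw [← huv]; ring
    rcases mul_eq_zero.mp huv' with h | h
    · exact absurd h h2F
    · exact h
  have h01 : (a 0 + a 1 + a 2) ≠ 0 ∨ (a 0 + a 1 - a 2) ≠ 0 := key _ _ (by ring)
  have h23 : (a 0 - a 1 + a 2) ≠ 0 ∨ (a 0 - a 1 - a 2) ≠ 0 := key _ _ (by ring)
  rcases h01 with h | h <;> rcases h23 with h' | h'
  · exact two_le_hnorm (i := 0) (j := 2) (by decide) (hw0 ▸ h) (hw2 ▸ h')
  · exact two_le_hnorm (i := 0) (j := 3) (by decide) (hw0 ▸ h) (hw3 ▸ h')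
  · exact two_le_hnorm (i := 1) (j := 2) (by decide) (hw1 ▸ h) (hw2 ▸ h')
  · exact two_le_hnorm (i := 1) (j := 3) (by decide) (hw1 ▸ h) (hw3 ▸ h')

lemma row4 (h4F : (4 : F) ≠ 0) (a : Fin 4 → F) (ha3 : a 3 ≠ 0) :
    1 ≤ hammingNorm (fun j => ∑ i, a i * hadA F i j) := by
  have : ∃ j, (∑ i, a i * hadA F i j) ≠ 0 := by
    by_contra hcon
    push_neg at hcon
    apply ha3
    have := recover a 3
    simp only [hcon, zero_mul, Finset.sum_const_zero] at this
    rcases mul_eq_zero.mp this.symm with h | h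
    · exact absurd h h4F
    · exact h
  obtain ⟨j, hj⟩ := this
  unfold hammingNorm
  rw [Nat.one_le_iff_ne_zero, ← Nat.pos_iff_ne_zero, Finset.card_pos]
  exact ⟨j, by simpa using hj⟩

end rows

def mpcMap {F : Type*} [Field F] {n : ℕ} (C : Fin 4 → Submodule F (Fin n → F)) :
    (Π i : Fin 4, C i) →ₗ[F] (Fin n × Fin 4 → F) where
  toFun c := fun p => ∑ i, (c i : Fin n → F) p.1 * hadA F i p.2
  map_add' x y := by
    funext p
    simp [add_mul, Finset.sum_add_distrib]
  map_smul' m x := by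
    funext p
    simp [Finset.mul_sum, mul_assoc]

lemma mpcMap_inj {F : Type*} [Field F] {n : ℕ} (C : Fin 4 → Submodule F (Fin n → F))
    (h4 : (4 : F) ≠ 0) : Function.Injective (mpcMap C) := by
  rw [injective_iff_map_eq_zero]
  intro c hc
  have hzero : ∀ (i : Fin 4) (x : Fin n), (c i : Fin n → F) x = 0 := by
    intro i x
    have h := recover (fun kk => (c kk : Fin n → F) x) i
    have hc' : ∀ j : Fin 4, (∑ kk, (c kk : Fin n → F) x * hadA F kk j) = 0 := by
      intro j
      have := congrFun hc (x, j)
      simpa [mpcMap] using this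
    simp only [hc', zero_mul, Finset.sum_const_zero] at h
    rcases mul_eq_zero.mp h.symm with h' | h'
    · exact absurd h' h4
    · exact h'
  funext i
  exact Subtype.ext (funext fun x => hzero i x)

/-- From four Hermitian dual-containing `[n, k_j, d_j]` codes, `[C_1,C_2,C_3,C_4] hadA` is a
Hermitian dual-containing code of length `4n`, dimension `k_1+k_2+k_3+k_4`, and minimum
distance at least `min {4d_1, 2d_2, 2d_3, d_4}`. -/
theorem stmt14 {l : ℕ} (hl : OddPrimePow l) (hmod : l ^ 2 % 4 = 1) {F : Type*} [Field F]
    [Fintype F] [DecidableEq F] (hF : Fintype.card F = l ^ 2)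
    {n : ℕ} (C : Fin 4 → Submodule F (Fin n → F)) (k d : Fin 4 → ℕ)
    (hk : ∀ j, Module.finrank F (C j) = k j)
    (hC0 : ∀ j, ∃ x ∈ C j, x ≠ 0)
    (hd : ∀ j, minDist (C j : Set (Fin n → F)) = d j)
    (hC : ∀ j, hermDual l (C j : Set (Fin n → F)) ⊆ (C j : Set (Fin n → F))) :
    hermDual l (matProdCode (fun j => (C j : Set (Fin n → F))) (hadA F)) ⊆
        matProdCode (fun j => (C j : Set (Fin n → F))) (hadA F) ∧
      (∃ D : Submodule F (Fin n × Fin 4 → F),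
        (D : Set (Fin n × Fin 4 → F)) =
            matProdCode (fun j => (C j : Set (Fin n → F))) (hadA F) ∧
          Module.finrank F D = k 0 + k 1 + k 2 + k 3) ∧
      ∀ v ∈ matProdCode (fun j => (C j : Set (Fin n → F))) (hadA F), v ≠ 0 →
        min (4 * d 0) (min (2 * d 1) (min (2 * d 2) (d 3))) ≤ hammingNorm v := by
  classical
  have hlodd : Odd l := by
    obtain ⟨q, kk, hq, hqodd, hkk, rfl⟩ := hl
    exact hqodd.pow
  have h2F : (2 : F) ≠ 0 := two_ne_zero_of_card hl hF
  have h4F : (4 : F) ≠ 0 := by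
    intro h
    apply h2F
    have h' : (2 : F) * 2 = 0 := by rw [show (2:F) * 2 = 4 by norm_num]; exact h
    rcases mul_eq_zero.mp h' with h'' | h'' <;> exact h''
  refine ⟨?_, ?_, ?_⟩
  · -- dual containing
    intro v hv
    set b : Fin 4 → Fin n → F := fun i x => (4 : F)⁻¹ * ∑ j, v (x, j) * hadA F i j with hb
    refine ⟨b, ?_, ?_⟩
    · intro i
      apply hC i
      intro c hcmem
      have hw : (fun p : Fin n × Fin 4 => c p.1 * hadA F i p.2) ∈
          matProdCode (fun j => (C j : Set (Fin n → F))) (hadA F) := by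
        refine ⟨fun kk => if kk = i then c else 0, ?_, ?_⟩
        · intro kk
          by_cases h : kk = i <;> simp [h, hcmem, Submodule.zero_mem]
        · intro p
          rw [Finset.sum_eq_single i]
          · simp
          · intro j _ hji; simp [hji]
          · intro h; exact absurd (Finset.mem_univ i) h
      have h0 := hv _ hw
      have h0' : ∑ x : Fin n, (∑ j : Fin 4, v (x, j) * hadA F i j) * c x ^ l = 0 := by
        rw [← h0, Fintype.sum_prod_type]
        apply Finset.sum_congr rfl
        intro x _
        rw [Finset.sum_mul]
        apply Finset.sum_congr rfl
        intro j _
        rw [mul_pow, hadA_pow hlodd]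
        ring
      have hcalc : ∑ x, b i x * c x ^ l
          = (4 : F)⁻¹ * ∑ x : Fin n, (∑ j : Fin 4, v (x, j) * hadA F i j) * c x ^ l := by
        rw [Finset.mul_sum]
        apply Finset.sum_congr rfl
        intro x _
        rw [hb]
        ring
      show ∑ x, b i x * c x ^ l = 0
      rw [hcalc, h0', mul_zero]
    · intro p
      obtain ⟨x, j⟩ := p
      have hr := recover (fun j' => v (x, j')) j
      have hcalc : ∑ i, b i x * hadA F i j = (4 : F)⁻¹ * (4 * v (x, j)) := by
        rw [← hr, Finset.mul_sum]
        apply Finset.sum_congr rfl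
        intro i _
        have hsymm : ∑ j', v (x, j') * hadA F i j' = ∑ kk, v (x, kk) * hadA F kk i := by
          apply Finset.sum_congr rfl
          intro kk _
          rw [hadA_symm i kk]
        rw [hb]
        simp only [hsymm, hadA_symm i j]
        ring
      show v (x, j) = ∑ i, b i x * hadA F i j
      rw [hcalc, ← mul_assoc, inv_mul_cancel₀ h4F, one_mul]
  · -- dimension
    refine ⟨LinearMap.range (mpcMap C), ?_, ?_⟩
    · ext v
      simp only [SetLike.mem_coe, LinearMap.mem_range]
      constructor
      · rintro ⟨c, rfl⟩
        exact ⟨fun i => (c i : Fin n → F), fun i => (c i).2, fun p => rfl⟩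
      · rintro ⟨c, hmem, hv⟩
        refine ⟨fun i => ⟨c i, hmem i⟩, ?_⟩
        funext p
        exact (hv p).symm
    · rw [LinearMap.finrank_range_of_inj (mpcMap_inj C h4F),
        Module.finrank_pi_fintype, Fin.sum_univ_four, hk 0, hk 1, hk 2, hk 3]
  · -- minimum distance
    rintro v ⟨c, hmem, hv⟩ hvne
    have hnorm : hammingNorm v = ∑ x : Fin n, hammingNorm (fun j => v (x, j)) := norm_split v
    have hrow : ∀ x : Fin n, (fun j => v (x, j)) = fun j => ∑ i, c i x * hadA F i j := by
      intro x
      funext j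
      exact hv (x, j)
    have hmin : ∀ i : Fin 4, c i ≠ 0 → d i ≤ hammingNorm (c i) := by
      intro i hci
      rw [← hd i]
      exact Nat.sInf_le ⟨c i, hmem i, hci, rfl⟩
    have hcount : ∀ (i : Fin 4) (m : ℕ),
        (∀ x : Fin n, c i x ≠ 0 → m ≤ hammingNorm (fun j => v (x, j))) →
        m * hammingNorm (c i) ≤ hammingNorm v := by
      intro i m hx
      rw [hnorm]
      have hcard : hammingNorm (c i) = ({x | c i x ≠ 0} : Finset (Fin n)).card := rfl
      calc m * hammingNorm (c i) = ∑ _x ∈ ({x | c i x ≠ 0} : Finset (Fin n)), m := by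
            rw [Finset.sum_const, hcard, smul_eq_mul, mul_comm]
        _ ≤ ∑ x ∈ ({x | c i x ≠ 0} : Finset (Fin n)), hammingNorm (fun j => v (x, j)) := by
            apply Finset.sum_le_sum
            intro x hxmem
            exact hx x (by simpa using hxmem)
        _ ≤ ∑ x : Fin n, hammingNorm (fun j => v (x, j)) :=
            Finset.sum_le_sum_of_subset (Finset.subset_univ _)
    by_cases h3 : c 3 = 0
    · by_cases h2 : c 2 = 0
      · by_cases h1 : c 1 = 0
        · have h0 : c 0 ≠ 0 := by
            intro h0
            apply hvne
            funext p
            rw [hv p]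
            have : ∀ i : Fin 4, c i = 0 := by
              intro i; fin_cases i <;> assumption
            simp [this]
          have hcnt := hcount 0 4 (fun x hx => by
            rw [hrow x]
            exact row1 (fun i => c i x) hx (congrFun h1 x) (congrFun h2 x) (congrFun h3 x))
          exact le_trans (min_le_left _ _)
            (le_trans (Nat.mul_le_mul_left 4 (hmin 0 h0)) hcnt)
        · have hcnt := hcount 1 2 (fun x hx => by
            rw [hrow x]
            exact row2 h2F (fun i => c i x) hx (congrFun h2 x) (congrFun h3 x))
          exact le_trans ((min_le_right _ _).trans (min_le_left _ _))
            (le_trans (Nat.mul_le_mul_left 2 (hmin 1 h1)) hcnt)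
      · have hcnt := hcount 2 2 (fun x hx => by
          rw [hrow x]
          exact row3 h2F (fun i => c i x) hx (congrFun h3 x))
        exact le_trans ((min_le_right _ _).trans ((min_le_right _ _).trans (min_le_left _ _)))
          (le_trans (Nat.mul_le_mul_left 2 (hmin 2 h2)) hcnt)
    · have hcnt := hcount 3 1 (fun x hx => by
        rw [hrow x]
        exact row4 h4F (fun i => c i x) hx)
      refine le_trans ((min_le_right _ _).trans ((min_le_right _ _).trans (min_le_right _ _))) ?_
      calc d 3 ≤ hammingNorm (c 3) := hmin 3 h3
        _ = 1 * hammingNorm (c 3) := (one_mul _).symm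
        _ ≤ hammingNorm v := hcnt
end

section
/- Let F = GF(l^2) with l an odd prime power, and let C_1 ⊆ C_2 ⊆ ... ⊆ C_s be a chain of linear codes of length n over F with C_i^⊥h ⊆ C_i for each i. If A is an s × s upper-triangular matrix over F with nonzero diagonal entries, then the Hermitian dual of the matrix product code [C_1, ..., C_s]A is contained in [C_1, ..., C_s]A. -/
open Finset Matrix

/-- For a nested chain `C_1 ⊆ ⋯ ⊆ C_s` of Hermitian dual-containing codes and `A` an
upper-triangular matrix with nonzero diagonal, `[C_1, …, C_s]A` is Hermitian
dual-containing. -/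
theorem stmt15 {l : ℕ} (hl : OddPrimePow l) {F : Type*} [Field F] [Fintype F]
    (hF : Fintype.card F = l ^ 2) {n s : ℕ}
    (C : Fin s → Submodule F (Fin n → F))
    (hchain : ∀ i j : Fin s, i ≤ j → C i ≤ C j)
    (hC : ∀ i, hermDual l (C i : Set (Fin n → F)) ⊆ (C i : Set (Fin n → F)))
    (A : Matrix (Fin s) (Fin s) F)
    (hupper : ∀ i j : Fin s, j < i → A i j = 0)
    (hdiag : ∀ i, A i i ≠ 0) :
    hermDual l (matProdCode (fun i => (C i : Set (Fin n → F))) A) ⊆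
      matProdCode (fun i => (C i : Set (Fin n → F))) A := by

  classical
  have hl0 : l ≠ 0 := by
    obtain ⟨p, k, hp, -, hk, rfl⟩ := hl
    exact pow_ne_zero _ hp.pos.ne'
  intro v hv
  set B : Matrix (Fin s) (Fin s) F := Matrix.of fun i j => (A i j) ^ l with hBdef
  have hAtri : A.BlockTriangular id := fun i j h => hupper i j h
  have hBtri : B.BlockTriangular id := fun i j h => by
    simp [hBdef, hupper i j h, zero_pow hl0]
  have hAdet : IsUnit A.det := by
    rw [Matrix.det_of_upperTriangular hAtri]
    exact isUnit_iff_ne_zero.mpr (Finset.prod_ne_zero_iff.mpr fun i _ => hdiag i)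
  have hBdet : IsUnit B.det := by
    rw [Matrix.det_of_upperTriangular hBtri]
    refine isUnit_iff_ne_zero.mpr (Finset.prod_ne_zero_iff.mpr fun i _ => ?_)
    exact pow_ne_zero _ (hdiag i)
  set W : Fin s → Fin n → F := fun i a => ∑ j, (A i j) ^ l * v (a, j) with hWdef
  have hWdual : ∀ i, W i ∈ hermDual l (C i : Set (Fin n → F)) := by
    intro i c hc
    have hu : (fun p : Fin n × Fin s => c p.1 * A i p.2) ∈
        matProdCode (fun i => (C i : Set (Fin n → F))) A := by
      refine ⟨fun k => if k = i then c else 0, fun k => ?_, fun p => ?_⟩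
      · by_cases h : k = i
        · subst h; simpa using hc
        · simp [h]
      · have : ∑ k, (if k = i then c else 0) p.1 * A k p.2 = c p.1 * A i p.2 := by
          rw [Finset.sum_eq_single i]
          · simp
          · intro b _ hb; simp [hb]
          · intro h; exact absurd (Finset.mem_univ i) h
        exact this.symm
    have h0 := hv _ hu
    rw [Fintype.sum_prod_type] at h0
    show ∑ a, W i a * c a ^ l = 0
    calc ∑ a, W i a * c a ^ l
        = ∑ a, ∑ j, v (a, j) * (c a * A i j) ^ l := by
          refine Finset.sum_congr rfl fun a _ => ?_
          simp only [hWdef]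
          rw [Finset.sum_mul]
          refine Finset.sum_congr rfl fun j _ => ?_
          rw [mul_pow]; ring
      _ = 0 := h0
  have hWC : ∀ i k : Fin s, W k ∈ C i := by
    intro i k
    have hpos : 0 < s := i.pos
    set i0 : Fin s := ⟨0, hpos⟩ with hi0
    have hle : ∀ m : Fin s, i0 ≤ m := fun m => by
      rw [Fin.le_def]; exact Nat.zero_le _
    have h1 : W k ∈ hermDual l (C i0 : Set (Fin n → F)) := by
      intro c hc
      exact hWdual k c (hchain i0 k (hle k) hc)
    exact hchain i0 i (hle i) (hC i0 h1)
  have hBinv : B⁻¹ * B = 1 := Matrix.nonsing_inv_mul B hBdet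
  have hkey : ∀ a j, v (a, j) = ∑ k, B⁻¹ j k * W k a := by
    intro a j
    have h1 : B.mulVec (fun j' => v (a, j')) = fun k => W k a := by
      funext k
      simp [Matrix.mulVec, dotProduct, hWdef, hBdef]
    have h2 : (fun j' => v (a, j')) = B⁻¹.mulVec (fun k => W k a) := by
      rw [← h1, Matrix.mulVec_mulVec, hBinv, Matrix.one_mulVec]
    have h3 := congrFun h2 j
    simpa [Matrix.mulVec, dotProduct] using h3
  have hcol : ∀ (i : Fin s) (j : Fin s), (fun a => v (a, j)) ∈ C i := by
    intro i j
    have he : (fun a => v (a, j)) = ∑ k, B⁻¹ j k • W k := by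
      funext a
      rw [hkey a j]
      simp [Finset.sum_apply]
    rw [he]
    exact Submodule.sum_mem _ fun k _ => Submodule.smul_mem _ _ (hWC i k)
  have hAinv : A⁻¹ * A = 1 := Matrix.nonsing_inv_mul A hAdet
  refine ⟨fun i a => ∑ j, A⁻¹ j i * v (a, j), fun i => ?_, fun p => ?_⟩
  · have he : (fun a => ∑ j, A⁻¹ j i * v (a, j)) = ∑ j, A⁻¹ j i • (fun a => v (a, j)) := by
      funext a; simp [Finset.sum_apply]
    show (fun a => ∑ j, A⁻¹ j i * v (a, j)) ∈ C i
    rw [he]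
    exact Submodule.sum_mem _ fun j _ => Submodule.smul_mem _ _ (hcol i j)
  · obtain ⟨a, j0⟩ := p
    show v (a, j0) = ∑ i, (∑ j, A⁻¹ j i * v (a, j)) * A i j0
    have h1 : ∑ i, (∑ j, A⁻¹ j i * v (a, j)) * A i j0
        = ∑ j, (∑ i, A⁻¹ j i * A i j0) * v (a, j) := by
      simp_rw [Finset.sum_mul]
      rw [Finset.sum_comm]
      exact Finset.sum_congr rfl fun j _ => Finset.sum_congr rfl fun i _ => by ring
    rw [h1]
    have h2 : ∀ j, (∑ i, A⁻¹ j i * A i j0) = (1 : Matrix (Fin s) (Fin s) F) j j0 := by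
      intro j; rw [← hAinv]; simp [Matrix.mul_apply]
    simp_rw [h2]
    simp [Matrix.one_apply]
end

section
/- Let A be an s × s NSC upper-triangular matrix over F_q and C_i linear codes of length n with minimum distances d_i. Then the minimum distance of C = [C_1, ..., C_s]A equals exactly d* = min{ s·d_1, (s−1)·d_2, ..., 1·d_s }. -/
open Finset Matrix

/-- Hamming norm on a product index decomposes as a sum of columnwise counts. -/
lemma hammingNorm_prod_eq {F : Type*} [DecidableEq F] [Zero F] {α β : Type*}
    [Fintype α] [Fintype β] (v : α × β → F) :
    hammingNorm v = ∑ a : α, #(univ.filter fun b : β => v (a, b) ≠ 0) := by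
  simp only [hammingNorm, Finset.card_filter]
  exact Fintype.sum_prod_type _

/-- For `A` an `s × s` NSC upper-triangular matrix, the minimum distance of `[C_1, …, C_s]A`
equals `min {s d_1, (s-1) d_2, …, 1 d_s}`. -/
theorem stmt17 {F : Type*} [Field F] [DecidableEq F] {n s : ℕ} (hs : 0 < s)
    (A : Matrix (Fin s) (Fin s) F) (hA : NSC A)
    (hupper : ∀ i j : Fin s, j < i → A i j = 0)
    (C : Fin s → Submodule F (Fin n → F)) (d : Fin s → ℕ)
    (hC0 : ∀ i, ∃ x ∈ C i, x ≠ 0)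
    (hd : ∀ i, minDist (C i : Set (Fin n → F)) = d i) :
    minDist (matProdCode (fun i => (C i : Set (Fin n → F))) A) =
      Finset.univ.inf' (Finset.univ_nonempty_iff.mpr ⟨⟨0, hs⟩⟩)
        (fun i : Fin s => (s - (i : ℕ)) * d i) := by
  set m := Finset.univ.inf' (Finset.univ_nonempty_iff.mpr ⟨⟨0, hs⟩⟩)
      (fun i : Fin s => (s - (i : ℕ)) * d i) with hm
  -- basic facts about each C i
  have hmem : ∀ i, ∃ x ∈ C i, x ≠ 0 ∧ hammingNorm x = d i := by
    intro i
    have hne : {w | ∃ c ∈ (C i : Set (Fin n → F)), c ≠ 0 ∧ hammingNorm c = w}.Nonempty := by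
      obtain ⟨x, hx, hx0⟩ := hC0 i
      exact ⟨hammingNorm x, x, hx, hx0, rfl⟩
    have h1 := Nat.sInf_mem hne
    have h2 : sInf {w | ∃ c ∈ (C i : Set (Fin n → F)), c ≠ 0 ∧ hammingNorm c = w} = d i := hd i
    rw [h2] at h1
    obtain ⟨x, hx, hx0, hw⟩ := h1
    exact ⟨x, hx, hx0, hw⟩
  have hlbC : ∀ i, ∀ x ∈ C i, x ≠ 0 → d i ≤ hammingNorm x := by
    intro i x hx hx0
    have : hammingNorm x ∈ {w | ∃ c ∈ (C i : Set (Fin n → F)), c ≠ 0 ∧ hammingNorm c = w} :=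
      ⟨x, hx, hx0, rfl⟩
    have h := Nat.sInf_le this
    rwa [show sInf {w | ∃ c ∈ (C i : Set (Fin n → F)), c ≠ 0 ∧ hammingNorm c = w} = d i
      from hd i] at h
  -- diagonal entries of A are nonzero
  have hdiag : ∀ i : Fin s, A i i ≠ 0 := by
    intro i h0
    have ht1 : (i : ℕ) + 1 ≤ s := i.isLt
    have hdet := hA ((i : ℕ) + 1) ht1 (Fin.castLE ht1) (Fin.strictMono_castLE ht1)
    have htri : (Matrix.of fun r c : Fin ((i : ℕ) + 1) =>
        A (Fin.castLE ht1 r) (Fin.castLE ht1 c)).BlockTriangular id := by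
      intro r c hrc
      exact hupper _ _ (Fin.strictMono_castLE ht1 hrc)
    rw [Matrix.det_of_upperTriangular htri] at hdet
    have hlast : Fin.castLE ht1 (Fin.last (i : ℕ)) = i := by
      ext; simp [Fin.last]
    have hz : (Matrix.of fun r c : Fin ((i : ℕ) + 1) =>
        A (Fin.castLE ht1 r) (Fin.castLE ht1 c)) (Fin.last _) (Fin.last _) = 0 := by
      simp [hlast, h0]
    exact hdet.ne_zero (Finset.prod_eq_zero (Finset.mem_univ (Fin.last (i : ℕ))) hz)
  -- the weight set of the matrix product code
  set S := {w | ∃ v ∈ matProdCode (fun i => (C i : Set (Fin n → F))) A,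
    v ≠ 0 ∧ hammingNorm v = w} with hS
  -- upper bound: for each i, a codeword of weight ≤ (s - i) * d i
  have hub : ∀ i : Fin s, ∃ w ∈ S, w ≤ (s - (i : ℕ)) * d i := by
    intro i
    obtain ⟨x, hx, hx0, hxw⟩ := hmem i
    set v : Fin n × Fin s → F := fun p => x p.1 * A i p.2 with hv
    have hvmem : v ∈ matProdCode (fun i => (C i : Set (Fin n → F))) A := by
      refine ⟨fun j => if j = i then x else 0, fun j => ?_, fun p => ?_⟩
      · by_cases h : j = i
        · subst h; simpa using hx
        · simp [h, Submodule.zero_mem]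
      · rw [Finset.sum_eq_single i]
        · simp [hv]
        · intro b _ hb; simp [hb]
        · simp
    obtain ⟨a, ha⟩ := Function.ne_iff.mp hx0
    have hv0 : v ≠ 0 := by
      intro h
      have : v (a, i) = 0 := by rw [h]; rfl
      rw [hv] at this
      exact ha (by
        rcases mul_eq_zero.mp this with h' | h'
        · exact h'
        · exact absurd h' (hdiag i))
    refine ⟨hammingNorm v, ⟨v, hvmem, hv0, rfl⟩, ?_⟩
    rw [hammingNorm_prod_eq]
    set T : Finset (Fin n) := univ.filter fun a => x a ≠ 0 with hT
    have hTcard : #T = d i := by rw [← hxw]; rfl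
    have hzero : ∀ a ∈ univ, a ∉ T →
        #(univ.filter fun b : Fin s => v (a, b) ≠ 0) = 0 := by
      intro a _ haT
      have hxa : x a = 0 := by
        by_contra h; exact haT (Finset.mem_filter.mpr ⟨Finset.mem_univ _, h⟩)
      simp [hv, hxa]
    rw [← Finset.sum_subset (Finset.subset_univ T) hzero]
    calc ∑ a ∈ T, #(univ.filter fun b : Fin s => v (a, b) ≠ 0)
        ≤ ∑ _a ∈ T, (s - (i : ℕ)) := by
          refine Finset.sum_le_sum fun a _ => ?_
          calc #(univ.filter fun b : Fin s => v (a, b) ≠ 0)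
              ≤ #(Finset.Ici i) := by
                refine Finset.card_le_card fun b hb => ?_
                have hvb := (Finset.mem_filter.mp hb).2
                rw [Finset.mem_Ici]
                by_contra hbi
                exact hvb (by simp [hv, hupper i b (lt_of_not_ge hbi)])
            _ = s - (i : ℕ) := Fin.card_Ici i
      _ = (s - (i : ℕ)) * d i := by rw [Finset.sum_const, smul_eq_mul, hTcard, mul_comm]
  -- lower bound: every nonzero codeword has weight ≥ m
  have hlb : ∀ w ∈ S, m ≤ w := by
    rintro w ⟨v, ⟨c, hc, hvp⟩, hv0, rfl⟩
    have hcne : c ≠ 0 := by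
      intro h
      apply hv0
      funext p
      rw [hvp p, h]
      simp
    set T : Finset (Fin s) := univ.filter fun i => c i ≠ 0 with hT
    have hTne : T.Nonempty := by
      obtain ⟨i, hi⟩ := Function.ne_iff.mp hcne
      exact ⟨i, Finset.mem_filter.mpr ⟨Finset.mem_univ _, hi⟩⟩
    set t := T.max' hTne with htdef
    have hct : c t ≠ 0 := (Finset.mem_filter.mp (T.max'_mem hTne)).2
    have hgt : ∀ i : Fin s, t < i → c i = 0 := by
      intro i hi
      by_contra h
      exact absurd (T.le_max' i (Finset.mem_filter.mpr ⟨Finset.mem_univ _, h⟩)) (not_le.mpr hi)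
    have ht1 : (t : ℕ) + 1 ≤ s := t.isLt
    -- key claim: rows where c t is nonzero contribute at least s - t nonzero entries
    have hkey : ∀ a : Fin n, c t a ≠ 0 →
        s - (t : ℕ) ≤ #(univ.filter fun b : Fin s => v (a, b) ≠ 0) := by
      intro a hcta
      by_contra hlt
      push_neg at hlt
      set Z : Finset (Fin s) := univ.filter fun b => v (a, b) ≠ 0 with hZ
      have hWcard : (t : ℕ) + 1 ≤ #Zᶜ := by
        rw [Finset.card_compl, Fintype.card_fin]
        omega
      obtain ⟨W', hW'sub, hW'card⟩ := Finset.exists_subset_card_eq hWcard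
      set j := W'.orderEmbOfFin hW'card with hj
      have hdet := hA ((t : ℕ) + 1) ht1 j j.strictMono
      set M := Matrix.of fun r c' : Fin ((t : ℕ) + 1) => A (Fin.castLE ht1 r) (j c') with hM
      set x : Fin ((t : ℕ) + 1) → F := fun r => c (Fin.castLE ht1 r) a with hx
      have hxM : x ᵥ* M = 0 := by
        funext col
        show ∑ r, x r * M r col = 0
        have h1 : ∑ i ∈ univ.map (Fin.castLEOrderEmb ht1).toEmbedding,
            c i a * A i (j col) = ∑ r : Fin ((t : ℕ) + 1), x r * M r col := by
          rw [Finset.sum_map]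
          rfl
        have hre : ∑ r : Fin ((t : ℕ) + 1), x r * M r col
            = ∑ i : Fin s, c i a * A i (j col) := by
          rw [← h1]
          refine Finset.sum_subset (Finset.subset_univ _) ?_
          intro i _ hi
          have : t < i := by
            by_contra h
            push_neg at h
            apply hi
            refine Finset.mem_map.mpr ⟨⟨(i : ℕ), Nat.lt_succ_of_le (Fin.le_def.mp h)⟩,
              Finset.mem_univ _, ?_⟩
            ext; simp [Fin.castLEOrderEmb]
          simp [hgt i this]
        rw [hre]
        have hcol : v (a, j col) = 0 := by
          have hmemc := hW'sub (W'.orderEmbOfFin_mem hW'card col)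
          have := Finset.mem_compl.mp hmemc
          rw [hZ, Finset.mem_filter] at this
          push_neg at this
          exact this (Finset.mem_univ _)
        rw [← hcol, hvp]
      have hx0 : x = 0 := by
        have h1 : x ᵥ* (M * M⁻¹) = x := by
          rw [Matrix.mul_nonsing_inv M hdet, Matrix.vecMul_one]
        rw [← Matrix.vecMul_vecMul, hxM, Matrix.zero_vecMul] at h1
        exact h1.symm
      have hxt : x (Fin.last (t : ℕ)) ≠ 0 := by
        have : Fin.castLE ht1 (Fin.last (t : ℕ)) = t := by ext; simp [Fin.last]
        rw [hx]; simpa [this] using hcta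
      exact hxt (by rw [hx0]; rfl)
    -- assemble
    have hmle : m ≤ (s - (t : ℕ)) * d t := Finset.inf'_le _ (Finset.mem_univ t)
    refine hmle.trans ?_
    rw [hammingNorm_prod_eq]
    set T' : Finset (Fin n) := univ.filter fun a => c t a ≠ 0 with hT'
    have hT'card : d t ≤ #T' := hlbC t (c t) (hc t) hct
    calc (s - (t : ℕ)) * d t ≤ (s - (t : ℕ)) * #T' := Nat.mul_le_mul_left _ hT'card
      _ = ∑ _a ∈ T', (s - (t : ℕ)) := by rw [Finset.sum_const, smul_eq_mul, mul_comm]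
      _ ≤ ∑ a ∈ T', #(univ.filter fun b : Fin s => v (a, b) ≠ 0) :=
          Finset.sum_le_sum fun a ha => hkey a (Finset.mem_filter.mp ha).2
      _ ≤ ∑ a : Fin n, #(univ.filter fun b : Fin s => v (a, b) ≠ 0) :=
          Finset.sum_le_sum_of_subset (Finset.subset_univ T')
  -- conclude
  have hSne : S.Nonempty := by
    obtain ⟨w, hw, _⟩ := hub ⟨0, hs⟩
    exact ⟨w, hw⟩
  show sInf S = m
  refine le_antisymm ?_ (le_csInf hSne hlb)
  obtain ⟨i₀, _, hi₀⟩ := Finset.exists_mem_eq_inf' (Finset.univ_nonempty_iff.mpr ⟨⟨0, hs⟩⟩)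
    (fun i : Fin s => (s - (i : ℕ)) * d i)
  obtain ⟨w, hwS, hwle⟩ := hub i₀
  calc sInf S ≤ w := Nat.sInf_le hwS
    _ ≤ (s - (i₀ : ℕ)) * d i₀ := hwle
    _ = m := by rw [hm, hi₀]
end
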